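/- Let k ≥ 2, a ≥ 0, and F_k(λ) = λ^k/(λ + a). Then for all v, v' ∈ ℝ³, |F_k(⟨v⟩²) - F_k(⟨v'⟩²)| ≤ 2k · F_{k-1/2}(2(⟨v⟩² + |v - v'|²)) · |v - v'|, where ⟨v⟩² = 1 + |v|². -/

import Mathlib

/-!
Write `F_k(t) = t^k / (t + a)`. For `k ≥ 1` one has `0 ≤ F_k' ≤ k F_{k-1}`, and for `k ≥ 2` the
function `F_{k-1}` is nondecreasing, so by the mean value theorem `F_k` is `k F_{k-1}(M)`-Lipschitz
on `(0, M]`. Both `⟨v⟩²` and `⟨v'⟩²` lie below `M = 2(⟨v⟩² + |v - v'|²)`, and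
`|⟨v⟩² - ⟨v'⟩²| ≤ (|v| + |v'|) |v - v'| ≤ 2 √M |v - v'|`; finally `√M F_{k-1}(M) = F_{k-1/2}(M)`.
-/

open Set Real

noncomputable def weight (k a t : ℝ) : ℝ := t ^ k / (t + a)

section Weight

variable {k a s t : ℝ}

lemma weight_nonneg (ha : 0 ≤ a) (ht : 0 < t) : 0 ≤ weight k a t := by
  unfold weight; positivity

lemma hasDerivAt_weight (ha : 0 ≤ a) (ht : 0 < t) :
    HasDerivAt (weight k a) (k * weight (k - 1) a t - t ^ k / (t + a) ^ 2) t := by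
  have hta : t + a ≠ 0 := by positivity
  refine ((hasDerivAt_rpow_const (p := k) (Or.inl ht.ne')).div
    ((hasDerivAt_id' t).add_const a) hta).congr_deriv ?_
  unfold weight
  rw [rpow_sub_one ht.ne']
  field_simp

lemma abs_deriv_weight_le (hk : 1 ≤ k) (ha : 0 ≤ a) (ht : 0 < t) :
    |k * weight (k - 1) a t - t ^ k / (t + a) ^ 2| ≤ k * weight (k - 1) a t := by
  have hF : 0 ≤ weight (k - 1) a t := weight_nonneg ha ht
  have hsplit : t ^ k / (t + a) ^ 2 = weight (k - 1) a t * (t / (t + a)) := by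
    unfold weight
    rw [rpow_sub_one ht.ne']
    field_simp
  have hfrac : t / (t + a) ≤ 1 := div_le_one_of_le₀ (by linarith) (by positivity)
  have hsecond : t ^ k / (t + a) ^ 2 ≤ k * weight (k - 1) a t := by
    rw [hsplit]
    calc weight (k - 1) a t * (t / (t + a)) ≤ weight (k - 1) a t * 1 := by gcongr
      _ ≤ k * weight (k - 1) a t := by nlinarith
  exact abs_sub_le_of_nonneg_of_le (by positivity) le_rfl (by positivity) hsecond

lemma monotoneOn_weight (hk : 1 ≤ k) (ha : 0 ≤ a) : MonotoneOn (weight k a) (Ioi 0) := by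
  intro s (hs : 0 < s) t (ht : 0 < t) hst
  have hpow : s ^ (k - 1) ≤ t ^ (k - 1) := rpow_le_rpow hs.le hst (by linarith)
  have hpow' : s ^ k ≤ t ^ k := rpow_le_rpow hs.le hst (by linarith)
  have hs_pos : 0 < s ^ (k - 1) := rpow_pos_of_pos hs _
  have hcross : s ^ k * t ≤ t ^ k * s := by
    rw [← sub_add_cancel k 1, rpow_add_one hs.ne', rpow_add_one ht.ne']
    calc s ^ (k - 1) * s * t = s ^ (k - 1) * (s * t) := by ring
      _ ≤ t ^ (k - 1) * (s * t) := by gcongr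
      _ = t ^ (k - 1) * t * s := by ring
  unfold weight
  rw [div_le_div_iff₀ (by positivity) (by positivity)]
  nlinarith [mul_le_mul_of_nonneg_right hpow' ha]

lemma abs_weight_sub_le (hk : 2 ≤ k) (ha : 0 ≤ a) {M x y : ℝ}
    (hx : x ∈ Ioc 0 M) (hy : y ∈ Ioc 0 M) :
    |weight k a x - weight k a y| ≤ k * weight (k - 1) a M * |x - y| := by
  have hderiv_le : ∀ t ∈ Ioc 0 M,
      ‖k * weight (k - 1) a t - t ^ k / (t + a) ^ 2‖ ≤ k * weight (k - 1) a M := by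
    intro t ht
    rw [norm_eq_abs]
    refine (abs_deriv_weight_le (by linarith) ha ht.1).trans ?_
    gcongr
    exact monotoneOn_weight (by linarith) ha ht.1 (ht.1.trans_le ht.2) ht.2
  have := (convex_Ioc 0 M).norm_image_sub_le_of_norm_hasDerivWithin_le
    (fun t ht => (hasDerivAt_weight ha ht.1).hasDerivWithinAt) hderiv_le hy hx
  simpa only [norm_eq_abs] using this

lemma sqrt_mul_weight (ht : 0 < t) : √t * weight k a t = weight (k + 1 / 2) a t := by
  unfold weight
  rw [sqrt_eq_rpow, rpow_add ht]
  ring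

end Weight

section Norms

variable {E : Type*} [SeminormedAddCommGroup E] (v v' : E)

lemma one_add_sq_norm_le : 1 + ‖v'‖ ^ 2 ≤ 2 * (1 + ‖v‖ ^ 2 + ‖v - v'‖ ^ 2) := by
  have h : ‖v'‖ ≤ ‖v‖ + ‖v - v'‖ := norm_le_norm_add_norm_sub v v'
  nlinarith [norm_nonneg v', sq_nonneg (‖v‖ - ‖v - v'‖)]

lemma abs_sq_norm_sub_sq_norm_le :
    |‖v‖ ^ 2 - ‖v'‖ ^ 2| ≤ 2 * √(2 * (1 + ‖v‖ ^ 2 + ‖v - v'‖ ^ 2)) * ‖v - v'‖ := by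
  have hsum : ‖v‖ + ‖v'‖ ≤ 2 * √(2 * (1 + ‖v‖ ^ 2 + ‖v - v'‖ ^ 2)) := by
    have h : ‖v'‖ ≤ ‖v‖ + ‖v - v'‖ := norm_le_norm_add_norm_sub v v'
    suffices (‖v‖ + ‖v'‖) / 2 ≤ √(2 * (1 + ‖v‖ ^ 2 + ‖v - v'‖ ^ 2)) by linarith
    apply le_sqrt_of_sq_le
    nlinarith [norm_nonneg v', norm_nonneg (v - v'), sq_nonneg (‖v‖ - ‖v - v'‖)]
  calc |‖v‖ ^ 2 - ‖v'‖ ^ 2| = |‖v‖ - ‖v'‖| * (‖v‖ + ‖v'‖) := by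
        rw [sq_sub_sq, abs_mul, abs_of_nonneg (by positivity : 0 ≤ ‖v‖ + ‖v'‖), mul_comm]
    _ ≤ ‖v - v'‖ * (2 * √(2 * (1 + ‖v‖ ^ 2 + ‖v - v'‖ ^ 2))) := by
        gcongr
        exact abs_norm_sub_norm_le v v'
    _ = _ := by ring

end Norms

/-- The weight difference estimate
|F_k(⟨v⟩²) - F_k(⟨v'⟩²)| ≤ 2k F_{k-1/2}(2(⟨v⟩² + |v-v'|²)) |v - v'|
where F_k(λ) = λ^k/(λ+a) and ⟨v⟩² = 1 + |v|². -/
theorem stmt_8 (k a : ℝ) (hk : 2 ≤ k) (ha : 0 ≤ a)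
    (v v' : EuclideanSpace ℝ (Fin 3)) :
    |((1 + ‖v‖^2) ^ k / ((1 + ‖v‖^2) + a)) - ((1 + ‖v'‖^2) ^ k / ((1 + ‖v'‖^2) + a))|
      ≤ 2 * k * ((2 * ((1 + ‖v‖^2) + ‖v - v'‖^2)) ^ (k - 1/2)
          / (2 * ((1 + ‖v‖^2) + ‖v - v'‖^2) + a)) * ‖v - v'‖ := by
  set M := 2 * ((1 + ‖v‖ ^ 2) + ‖v - v'‖ ^ 2)
  have hM : 0 < M := by positivity
  have hx : 1 + ‖v‖ ^ 2 ∈ Ioc 0 M := ⟨by positivity, by simp only [M]; nlinarith⟩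
  have hy : 1 + ‖v'‖ ^ 2 ∈ Ioc 0 M := ⟨by positivity, one_add_sq_norm_le v v'⟩
  have hhalf : √M * weight (k - 1) a M = weight (k - 1 / 2) a M := by
    rw [sqrt_mul_weight hM]; ring_nf
  change |weight k a _ - weight k a _| ≤ 2 * k * weight (k - 1 / 2) a M * ‖v - v'‖
  calc |weight k a _ - weight k a _| ≤ k * weight (k - 1) a M * |‖v‖ ^ 2 - ‖v'‖ ^ 2| := by
        simpa only [add_sub_add_left_eq_sub] using abs_weight_sub_le hk ha hx hy
    _ ≤ k * weight (k - 1) a M * (2 * √M * ‖v - v'‖) := by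
        gcongr
        · exact mul_nonneg (by linarith) (weight_nonneg ha hM)
        · exact abs_sq_norm_sub_sq_norm_le v v'
    _ = 2 * k * weight (k - 1 / 2) a M * ‖v - v'‖ := by rw [← hhalf]; ring
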